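/- Let L be a number field of degree [L : ℚ], and let x, y ∈ ℙⁿ(L) be two distinct points with homogeneous coordinates x_0, …, x_n and y_0, …, y_n lying in the ring of integers 𝒪_L. Let 𝔓_1, …, 𝔓_r be distinct nonzero prime ideals of 𝒪_L such that for each k: (i) some coordinate x_i does not lie in 𝔓_k, (ii) some coordinate y_j does not lie in 𝔓_k, and (iii) x_i y_j − x_j y_i ∈ 𝔓_k for all i, j (i.e., x and y have the same reduction modulo 𝔓_k). Then h(x) + h(y) ≥ (1/[L : ℚ]) · ∑_{k=1}^r log N_{L/ℚ}(𝔓_k) − log 2. -/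

import Mathlib

open NumberField IsDedekindDomain
open scoped Classical

/-- The set of places of a number field `K`: infinite (archimedean) places together with
finite places (nonzero prime ideals of the ring of integers). -/
abbrev NumberField.Place (K : Type*) [Field K] [NumberField K] : Type _ :=
  InfinitePlace K ⊕ HeightOneSpectrum (𝓞 K)

variable (K : Type*) [Field K] [NumberField K]

/-- The residue characteristic of a finite place. -/
noncomputable def NumberField.resChar (v : HeightOneSpectrum (𝓞 K)) : ℕ :=
  ringChar (𝓞 K ⧸ v.asIdeal)

/-- The ramification index of a finite place over its residue characteristic. -/
noncomputable def NumberField.eIdx (v : HeightOneSpectrum (𝓞 K)) : ℕ :=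
  Ideal.ramificationIdx'
    (Ideal.span {(NumberField.resChar K v : ℤ)}) v.asIdeal

/-- The residue degree of a finite place over its residue characteristic,
computed as the exponent of `p` in the absolute norm of the prime. -/
noncomputable def NumberField.fIdx (v : HeightOneSpectrum (𝓞 K)) : ℕ :=
  (Ideal.absNorm v.asIdeal).factorization (NumberField.resChar K v)

/-- The order of vanishing of `x ∈ K` at a finite place. -/
noncomputable def NumberField.ordAt (v : HeightOneSpectrum (𝓞 K)) (x : K) : ℤ :=
  if hx : x = 0 then 0
  else -Multiplicative.toAdd (WithZero.unzero (((v.valuation K).ne_zero_iff).mpr hx))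

/-- The absolute value attached to a finite place `v` with residue characteristic `p`,
normalized so that it extends the standard (`p`-adic) absolute value on `ℚ`:
`|x|_v = p ^ (-(ord_v x) / e(v/p))`. -/
noncomputable def NumberField.finAbs (v : HeightOneSpectrum (𝓞 K)) (x : K) : ℝ :=
  if x = 0 then 0
  else (NumberField.resChar K v : ℝ) ^
    (-(NumberField.ordAt K v x : ℝ) / (NumberField.eIdx K v : ℝ))

/-- The normalized absolute value `|·|_v` attached to a place `v` of `K`; it extends the
standard absolute value on the completion `ℚ_v` of `ℚ`. -/
noncomputable def NumberField.placeAbs : NumberField.Place K → K → ℝ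
  | Sum.inl w => fun x => w x
  | Sum.inr v => fun x => NumberField.finAbs K v x

/-- The local degree `[K_v : ℚ_v]` of a place `v` of `K`. -/
noncomputable def NumberField.localDeg : NumberField.Place K → ℕ
  | Sum.inl w => w.mult
  | Sum.inr v => NumberField.eIdx K v * NumberField.fIdx K v

/-- The normalized local degree `n_v = [K_v : ℚ_v] / [K : ℚ]`. -/
noncomputable def NumberField.nv (v : NumberField.Place K) : ℝ :=
  (NumberField.localDeg K v : ℝ) / (Module.finrank ℚ K : ℝ)

/-- `max_k |x_k|_v` for a tuple of projective coordinates. -/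
noncomputable def NumberField.supAbs (v : NumberField.Place K) {n : ℕ}
    (x : Fin (n + 1) → K) : ℝ :=
  Finset.univ.sup' Finset.univ_nonempty fun i => NumberField.placeAbs K v (x i)

/-- The absolute logarithmic Weil height of a point of `ℙⁿ(K)` given by projective
coordinates `x = [x_0 : ⋯ : x_n]`:  `h(x) = ∑_v n_v log max_k |x_k|_v`. -/
noncomputable def NumberField.heightProj {n : ℕ} (x : Fin (n + 1) → K) : ℝ :=
  ∑ᶠ v : NumberField.Place K, NumberField.nv K v * Real.log (NumberField.supAbs K v x)

/-- The logarithmic `v`-adic distance between two points of `ℙⁿ(K)`: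
`δ_v(x,y) = -log ( max_{i,j} |x_i y_j - x_j y_i|_v / (max_k |x_k|_v ⬝ max_k |y_k|_v) )`. -/
noncomputable def NumberField.deltaAt (v : NumberField.Place K) {n : ℕ}
    (x y : Fin (n + 1) → K) : ℝ :=
  -Real.log
    ((Finset.univ.sup' Finset.univ_nonempty fun p : Fin (n + 1) × Fin (n + 1) =>
        NumberField.placeAbs K v (x p.1 * y p.2 - x p.2 * y p.1)) /
      (NumberField.supAbs K v x * NumberField.supAbs K v y))

/-!
Put `D = xᵢ yⱼ - xⱼ yᵢ ≠ 0` and `‖x‖_v = (max_k |x_k|_v) ^ [L_v : ℚ_v]`, so that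
`[L : ℚ] h(x) = ∑_v log ‖x‖_v` and the product formula reads `∑_v log ‖D‖_v = 0`.
At every place `‖D‖_v ≤ ‖x‖_v ‖y‖_v`, up to a factor `2 ^ [L_v : ℚ_v]` at the archimedean
places. At `𝔓_k` both points are primitive, so `‖x‖ = ‖y‖ = 1`, while `D ∈ 𝔓_k` gives
`‖D‖ ≤ N(𝔓_k)⁻¹`. Summing the logarithms of these bounds gives the theorem; among the finite
places only the primes containing `D` contribute.
-/

lemma finsum_sum_eq_sum_add_sum {α β M : Type*} [Fintype α] [AddCommMonoid M]
    (f : α ⊕ β → M) (T : Finset β) (hT : ∀ b ∉ T, f (Sum.inr b) = 0) :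
    ∑ᶠ p, f p = ∑ a, f (Sum.inl a) + ∑ b ∈ T, f (Sum.inr b) := by
  rw [finsum_eq_sum_of_support_subset f (s := Finset.univ.disjSum T), Finset.sum_disjSum]
  rintro (a | b) hp
  · simp
  · by_contra hb
    exact hp (hT b (by simpa using hb))

section CrossTerm

variable {R ι : Type*} [CommRing R]

lemma Ideal.exists_notMem_of_cross_notMem {I : Ideal R} {x y : ι → R} {i j : ι}
    (h : x i * y j - x j * y i ∉ I) : (∃ k, x k ∉ I) ∧ ∃ k, y k ∉ I := by
  constructor <;> by_contra! hI <;> apply h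
  · exact I.sub_mem (I.mul_mem_right _ (hI i)) (I.mul_mem_right _ (hI j))
  · exact I.sub_mem (I.mul_mem_left _ (hI j)) (I.mul_mem_left _ (hI i))

lemma exists_ne_zero_of_cross_ne_zero {x y : ι → R} {i j : ι}
    (h : x i * y j - x j * y i ≠ 0) : (∃ k, x k ≠ 0) ∧ ∃ k, y k ≠ 0 := by
  simpa using Ideal.exists_notMem_of_cross_notMem (I := ⊥) (by simpa using h)

variable [Fintype ι] [Nonempty ι]

lemma AbsoluteValue.sup'_pos (f : AbsoluteValue R ℝ) {x : ι → R}
    (hx : ∃ k, x k ≠ 0) : 0 < Finset.univ.sup' Finset.univ_nonempty fun k => f (x k) := by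
  obtain ⟨k, hk⟩ := hx
  exact (f.pos hk).trans_le (Finset.le_sup' (fun k => f (x k)) (Finset.mem_univ k))

lemma AbsoluteValue.map_cross_le (f : AbsoluteValue R ℝ) (x y : ι → R) (i j : ι) :
    f (x i * y j - x j * y i) ≤
      2 * ((Finset.univ.sup' Finset.univ_nonempty fun k => f (x k)) *
        Finset.univ.sup' Finset.univ_nonempty fun k => f (y k)) := by
  set sx := Finset.univ.sup' Finset.univ_nonempty fun k => f (x k)
  set sy := Finset.univ.sup' Finset.univ_nonempty fun k => f (y k)
  have hx : ∀ k, f (x k) ≤ sx := fun k => Finset.le_sup' (fun k => f (x k)) (Finset.mem_univ k)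
  have hy : ∀ k, f (y k) ≤ sy := fun k => Finset.le_sup' (fun k => f (y k)) (Finset.mem_univ k)
  calc f (x i * y j - x j * y i) ≤ f (x i) * f (y j) + f (x j) * f (y i) := by
        simpa only [map_mul] using f.sub_le_add (x i * y j) (x j * y i)
    _ ≤ sx * sy + sx * sy := by
        gcongr <;> first | exact hx _ | exact hy _ | exact (f.nonneg _).trans (hx i)
    _ = 2 * (sx * sy) := by ring

lemma IsNonarchimedean.map_cross_le {f : AbsoluteValue R ℝ} (hf : IsNonarchimedean f)
    (x y : ι → R) (i j : ι) :
    f (x i * y j - x j * y i) ≤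
      (Finset.univ.sup' Finset.univ_nonempty fun k => f (x k)) *
        Finset.univ.sup' Finset.univ_nonempty fun k => f (y k) := by
  set sx := Finset.univ.sup' Finset.univ_nonempty fun k => f (x k)
  set sy := Finset.univ.sup' Finset.univ_nonempty fun k => f (y k)
  have hx : ∀ k, f (x k) ≤ sx := fun k => Finset.le_sup' (fun k => f (x k)) (Finset.mem_univ k)
  have hy : ∀ k, f (y k) ≤ sy := fun k => Finset.le_sup' (fun k => f (y k)) (Finset.mem_univ k)
  have hprod : ∀ k l, f (x k * y l) ≤ sx * sy := fun k l => by
    rw [map_mul]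
    exact mul_le_mul (hx k) (hy l) (f.nonneg _) ((f.nonneg _).trans (hx i))
  calc f (x i * y j - x j * y i) ≤ max (f (x i * y j)) (f (x j * y i)) := by
        simpa only [sub_eq_add_neg, map_neg_eq_map] using hf (x i * y j) (-(x j * y i))
    _ ≤ sx * sy := max_le (hprod i j) (hprod j i)

end CrossTerm

namespace NumberField

variable {L : Type*} [Field L] [NumberField L]

lemma exists_resChar_prime_absNorm_eq_pow (v : HeightOneSpectrum (𝓞 L)) :
    (resChar L v).Prime ∧ ∃ m, Ideal.absNorm v.asIdeal = resChar L v ^ m := by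
  have : Finite (𝓞 L ⧸ v.asIdeal) := v.asIdeal.finiteQuotientOfFreeOfNeBot v.ne_bot
  let := Ideal.Quotient.field v.asIdeal
  let := Fintype.ofFinite (𝓞 L ⧸ v.asIdeal)
  obtain ⟨m, hp, hcard⟩ := FiniteField.card (𝓞 L ⧸ v.asIdeal) (ringChar (𝓞 L ⧸ v.asIdeal))
  refine ⟨hp, m, ?_⟩
  rw [Ideal.absNorm_apply, Submodule.cardQuot_apply, Nat.card_eq_fintype_card, hcard]
  rfl

lemma resChar_prime (v : HeightOneSpectrum (𝓞 L)) : (resChar L v).Prime :=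
  (exists_resChar_prime_absNorm_eq_pow v).1

lemma absNorm_eq_resChar_pow_fIdx (v : HeightOneSpectrum (𝓞 L)) :
    Ideal.absNorm v.asIdeal = resChar L v ^ fIdx L v := by
  obtain ⟨hp, m, hm⟩ := exists_resChar_prime_absNorm_eq_pow v
  rw [fIdx, hm, hp.factorization_pow, Finsupp.single_eq_same]

lemma eIdx_ne_zero (v : HeightOneSpectrum (𝓞 L)) : eIdx L v ≠ 0 := by
  have hmem : (resChar L v : 𝓞 L) ∈ v.asIdeal := by
    rw [← Ideal.Quotient.eq_zero_iff_mem, map_natCast]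
    exact ringChar.Nat.cast_ringChar
  refine Ideal.IsDedekindDomain.ramificationIdx'_ne_zero ?_ v.isPrime ?_ <;>
    rw [Ideal.map_span, Set.image_singleton]
  · simpa [Ideal.span_singleton_eq_bot] using (resChar_prime v).ne_zero
  · simpa [Ideal.span_singleton_le_iff_mem] using hmem

lemma localDeg_inr_ne_zero (v : HeightOneSpectrum (𝓞 L)) : localDeg L (Sum.inr v) ≠ 0 := by
  refine mul_ne_zero (eIdx_ne_zero v) fun hf => ?_
  have := HeightOneSpectrum.one_lt_absNorm v
  rw [absNorm_eq_resChar_pow_fIdx, hf, pow_zero] at this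
  exact this.false

lemma finAbs_nonneg (v : HeightOneSpectrum (𝓞 L)) (a : L) : 0 ≤ finAbs L v a := by
  unfold finAbs
  split_ifs <;> positivity

/-- Both sides are `p ^ (-f · ord_v a)`, as `N(v) = p ^ f`. -/
lemma finAbs_pow_localDeg (v : HeightOneSpectrum (𝓞 L)) (a : L) :
    finAbs L v a ^ localDeg L (Sum.inr v) = HeightOneSpectrum.adicAbv L v a := by
  by_cases ha : a = 0
  · simp [ha, finAbs, localDeg_inr_ne_zero]
  have hp : (0 : ℝ) < resChar L v := by exact_mod_cast (resChar_prime v).pos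
  have he : (eIdx L v : ℝ) ≠ 0 := by exact_mod_cast eIdx_ne_zero v
  rw [HeightOneSpectrum.adicAbv_def, WithZeroMulInt.toNNReal_neg_apply _
    ((v.valuation L).ne_zero_iff.mpr ha), finAbs, if_neg ha, ordAt, dif_neg ha, localDeg,
    absNorm_eq_resChar_pow_fIdx]
  push_cast
  rw [← Real.rpow_natCast, ← Real.rpow_mul hp.le, ← Real.rpow_intCast, ← Real.rpow_natCast,
    ← Real.rpow_mul hp.le]
  congr 1
  push_cast
  field_simp

lemma adicAbv_le_inv_absNorm (v : HeightOneSpectrum (𝓞 L)) {a : 𝓞 L} (ha : a ∈ v.asIdeal) :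
    HeightOneSpectrum.adicAbv L v (algebraMap (𝓞 L) L a) ≤ (Ideal.absNorm v.asIdeal : ℝ)⁻¹ := by
  have hval : v.intValuation a ≤ WithZero.exp (-(1 : ℕ) : ℤ) :=
    (v.intValuation_le_pow_iff_mem a 1).mpr (by rwa [pow_one])
  have := (WithZeroMulInt.toNNReal_strictMono (HeightOneSpectrum.one_lt_absNorm_nnreal v)).monotone
    hval
  rw [WithZeroMulInt.toNNReal_neg_apply _ WithZero.exp_ne_zero, WithZero.toAdd_unzero_eq_log,
    WithZero.log_exp, Nat.cast_one, zpow_neg_one] at this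
  rw [HeightOneSpectrum.adicAbv_def, HeightOneSpectrum.valuation_of_algebraMap]
  exact_mod_cast this

section SupAdicAbv

variable {ι : Type*} [Fintype ι] [Nonempty ι]

noncomputable def supAdicAbv (v : HeightOneSpectrum (𝓞 L)) (x : ι → L) : ℝ :=
  Finset.univ.sup' Finset.univ_nonempty fun i => HeightOneSpectrum.adicAbv L v (x i)

lemma supAbs_inr_pow_localDeg (v : HeightOneSpectrum (𝓞 L)) {n : ℕ} (x : Fin (n + 1) → L) :
    supAbs L (Sum.inr v) x ^ localDeg L (Sum.inr v) = supAdicAbv v x := by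
  have hle : ∀ i, HeightOneSpectrum.adicAbv L v (x i) ≤
      supAbs L (Sum.inr v) x ^ localDeg L (Sum.inr v) := fun i => by
    rw [← finAbs_pow_localDeg]
    gcongr
    · exact finAbs_nonneg v (x i)
    · exact Finset.le_sup' (fun i => placeAbs L (Sum.inr v) (x i)) (Finset.mem_univ i)
  obtain ⟨i, -, hi⟩ := Finset.exists_mem_eq_sup' Finset.univ_nonempty
    fun i => placeAbs L (Sum.inr v) (x i)
  refine le_antisymm ?_ (Finset.sup'_le _ _ fun i _ => hle i)
  rw [supAbs, hi]
  exact (finAbs_pow_localDeg v (x i)).trans_le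
    (Finset.le_sup' (fun i => HeightOneSpectrum.adicAbv L v (x i)) (Finset.mem_univ i))

lemma supAdicAbv_eq_one (v : HeightOneSpectrum (𝓞 L)) {x : ι → 𝓞 L}
    (hx : ∃ i, x i ∉ v.asIdeal) : supAdicAbv v (fun i => algebraMap (𝓞 L) L (x i)) = 1 := by
  obtain ⟨i, hi⟩ := hx
  have hN := HeightOneSpectrum.one_lt_absNorm_nnreal v
  refine le_antisymm (Finset.sup'_le _ _ fun k _ => v.adicAbv_coe_le_one (K := L) hN (x k)) ?_
  rw [← (v.adicAbv_coe_eq_one_iff (K := L) hN (x i)).mpr hi]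
  exact Finset.le_sup' (fun k => HeightOneSpectrum.adicAbv L v (algebraMap (𝓞 L) L (x k)))
    (Finset.mem_univ i)

lemma log_adicAbv_cross_le (v : HeightOneSpectrum (𝓞 L)) {x y : ι → L} {i j : ι}
    (hD : x i * y j - x j * y i ≠ 0) :
    Real.log (HeightOneSpectrum.adicAbv L v (x i * y j - x j * y i)) ≤
      Real.log (supAdicAbv v x) + Real.log (supAdicAbv v y) := by
  obtain ⟨hx, hy⟩ := exists_ne_zero_of_cross_ne_zero hD
  let f := HeightOneSpectrum.adicAbv L v
  rw [supAdicAbv, supAdicAbv, ← Real.log_mul (f.sup'_pos hx).ne' (f.sup'_pos hy).ne']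
  exact Real.log_le_log (f.pos hD) ((HeightOneSpectrum.isNonarchimedean_adicAbv L v).map_cross_le
    x y i j)

open Finset in
lemma sum_log_absNorm_add_sum_log_adicAbv_le {r : ℕ} {x y : ι → 𝓞 L} {i j : ι}
    (hD : x i * y j - x j * y i ≠ 0)
    (P : Fin r → HeightOneSpectrum (𝓞 L)) (hP : Function.Injective P)
    (hx : ∀ k, ∃ i, x i ∉ (P k).asIdeal) (hy : ∀ k, ∃ j, y j ∉ (P k).asIdeal)
    (hDP : ∀ k, x i * y j - x j * y i ∈ (P k).asIdeal)
    (T : Finset (HeightOneSpectrum (𝓞 L))) (hPT : ∀ k, P k ∈ T) :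
    ∑ k, Real.log (Ideal.absNorm (P k).asIdeal) +
        ∑ v ∈ T, Real.log (HeightOneSpectrum.adicAbv L v
          (algebraMap (𝓞 L) L (x i * y j - x j * y i))) ≤
      ∑ v ∈ T, (Real.log (supAdicAbv v fun k => algebraMap (𝓞 L) L (x k)) +
        Real.log (supAdicAbv v fun k => algebraMap (𝓞 L) L (y k))) := by
  have hD' : algebraMap (𝓞 L) L (x i * y j - x j * y i) ≠ 0 :=
    (map_ne_zero_iff _ (FaithfulSMul.algebraMap_injective (𝓞 L) L)).mpr hD
  have hsum : ∑ k, Real.log (Ideal.absNorm (P k).asIdeal) =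
      ∑ v ∈ T, if v ∈ univ.image P then Real.log (Ideal.absNorm v.asIdeal) else 0 := by
    rw [sum_ite_mem, inter_eq_right.mpr (image_subset_iff.mpr fun k _ => hPT k),
      sum_image hP.injOn]
  rw [hsum, ← sum_add_distrib]
  refine sum_le_sum fun v _ => ?_
  split_ifs with hv
  · obtain ⟨k, -, rfl⟩ := mem_image.mp hv
    have hle := Real.log_le_log (AbsoluteValue.pos _ hD') (adicAbv_le_inv_absNorm (P k) (hDP k))
    rw [Real.log_inv] at hle
    rw [supAdicAbv_eq_one _ (hx k), supAdicAbv_eq_one _ (hy k), Real.log_one]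
    linarith
  · rw [map_sub, map_mul, map_mul] at hD' ⊢
    rw [zero_add]
    exact log_adicAbv_cross_le v (x := fun k => algebraMap (𝓞 L) L (x k))
      (y := fun k => algebraMap (𝓞 L) L (y k)) hD'

end SupAdicAbv

lemma log_apply_cross_le (w : InfinitePlace L) {n : ℕ} {x y : Fin (n + 1) → L}
    {i j : Fin (n + 1)} (hD : x i * y j - x j * y i ≠ 0) :
    Real.log (w (x i * y j - x j * y i)) ≤
      Real.log 2 + Real.log (supAbs L (Sum.inl w) x) + Real.log (supAbs L (Sum.inl w) y) := by
  obtain ⟨hx, hy⟩ := exists_ne_zero_of_cross_ne_zero hD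
  have hsx : 0 < supAbs L (Sum.inl w) x := w.1.sup'_pos hx
  have hsy : 0 < supAbs L (Sum.inl w) y := w.1.sup'_pos hy
  rw [← Real.log_mul two_ne_zero hsx.ne', ← Real.log_mul (by positivity) hsy.ne', mul_assoc]
  exact Real.log_le_log (w.pos_iff.mpr hD) (w.1.map_cross_le x y i j)

open Finset in
lemma sum_mult_log_cross_le {n : ℕ} {x y : Fin (n + 1) → L} {i j : Fin (n + 1)}
    (hD : x i * y j - x j * y i ≠ 0) :
    ∑ w : InfinitePlace L, (w.mult : ℝ) * Real.log (w (x i * y j - x j * y i)) ≤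
      Module.finrank ℚ L * Real.log 2 +
        ∑ w : InfinitePlace L, (w.mult : ℝ) * Real.log (supAbs L (Sum.inl w) x) +
        ∑ w : InfinitePlace L, (w.mult : ℝ) * Real.log (supAbs L (Sum.inl w) y) := by
  calc _ ≤ ∑ w : InfinitePlace L, (w.mult : ℝ) * (Real.log 2 +
        Real.log (supAbs L (Sum.inl w) x) + Real.log (supAbs L (Sum.inl w) y)) :=
        sum_le_sum fun w _ => mul_le_mul_of_nonneg_left (log_apply_cross_le w hD) (by positivity)
    _ = _ := by
        simp only [mul_add, sum_add_distrib, ← sum_mul]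
        rw [← InfinitePlace.sum_mult_eq, Nat.cast_sum]

lemma sum_mult_log_add_sum_log_adicAbv_eq_zero {a : L} (ha : a ≠ 0)
    (T : Finset (HeightOneSpectrum (𝓞 L)))
    (hT : ∀ v ∉ T, HeightOneSpectrum.adicAbv L v a = 1) :
    ∑ w : InfinitePlace L, (w.mult : ℝ) * Real.log (w a) +
      ∑ v ∈ T, Real.log (HeightOneSpectrum.adicAbv L v a) = 0 := by
  have h := prod_abs_eq_one ha
  rw [← finprod_comp_equiv FinitePlace.equivHeightOneSpectrum.symm] at h
  simp only [FinitePlace.equivHeightOneSpectrum_symm_apply, FinitePlace.norm_embedding] at h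
  rw [finprod_eq_prod_of_mulSupport_subset _ (s := T) fun v hv => ?_] at h
  · have hw : ∀ w : InfinitePlace L, w a ^ w.mult ≠ 0 :=
      fun w => pow_ne_zero _ (w.pos_iff.mpr ha).ne'
    have hv : ∀ v ∈ T, HeightOneSpectrum.adicAbv L v a ≠ 0 := fun v _ => AbsoluteValue.ne_zero _ ha
    have := congrArg Real.log h
    rw [Real.log_mul (Finset.prod_ne_zero_iff.mpr fun w _ => hw w)
      (Finset.prod_ne_zero_iff.mpr hv), Real.log_prod (fun w _ => hw w), Real.log_prod hv,
      Real.log_one] at this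
    simpa only [Real.log_pow] using this
  · by_contra hvT
    exact hv (hT v hvT)

lemma nv_mul_log (p : Place L) (t : ℝ) :
    nv L p * Real.log t = Real.log (t ^ localDeg L p) / Module.finrank ℚ L := by
  rw [nv, Real.log_pow]
  ring

lemma heightProj_mul_finrank {n : ℕ} (x : Fin (n + 1) → L) (T : Finset (HeightOneSpectrum (𝓞 L)))
    (hT : ∀ v ∉ T, supAdicAbv v x = 1) :
    heightProj L x * Module.finrank ℚ L =
      ∑ w : InfinitePlace L, (w.mult : ℝ) * Real.log (supAbs L (Sum.inl w) x) +
        ∑ v ∈ T, Real.log (supAdicAbv v x) := by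
  have hd : (Module.finrank ℚ L : ℝ) ≠ 0 := by exact_mod_cast Module.finrank_pos.ne'
  simp only [heightProj, nv_mul_log]
  rw [finsum_sum_eq_sum_add_sum _ T fun v hv => by
    rw [supAbs_inr_pow_localDeg, hT v hv, Real.log_one, zero_div]]
  simp only [supAbs_inr_pow_localDeg]
  simp only [localDeg, Real.log_pow, ← Finset.sum_div, ← add_div, div_mul_cancel₀ _ hd]

end NumberField

/-- Proposition 3.3(b) of Baker–Silverman: Let `L` be a number field and let
`x ≠ y` be distinct points of `ℙⁿ(L)` with coordinates in `𝒪_L`.  Let `𝔓_1, …, 𝔓_r` be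
distinct nonzero primes of `𝒪_L` such that, for each `k`, neither `x` nor `y` reduces to the
zero vector mod `𝔓_k` and `x ≡ y (mod 𝔓_k)` (all cross terms `x_i y_j - x_j y_i` lie in
`𝔓_k`).  Then `h(x) + h(y) ≥ (1/[L:ℚ]) ∑_k log N_{L/ℚ}(𝔓_k) - log 2`. -/
theorem height_add_height_ge_sum_log_norm
    {L : Type*} [Field L] [NumberField L] {n r : ℕ}
    (x y : Fin (n + 1) → 𝓞 L)
    (hxy : ∃ i j, x i * y j ≠ x j * y i)
    (P : Fin r → HeightOneSpectrum (𝓞 L)) (hP : Function.Injective P)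
    (hx : ∀ k, ∃ i, x i ∉ (P k).asIdeal)
    (hy : ∀ k, ∃ j, y j ∉ (P k).asIdeal)
    (hcong : ∀ k, ∀ i j, x i * y j - x j * y i ∈ (P k).asIdeal) :
    NumberField.heightProj L (fun i => algebraMap (𝓞 L) L (x i)) +
        NumberField.heightProj L (fun i => algebraMap (𝓞 L) L (y i)) ≥
      (1 / (Module.finrank ℚ L : ℝ)) *
          (∑ k, Real.log (Ideal.absNorm (P k).asIdeal)) -
        Real.log 2 := by
  obtain ⟨i, j, hij⟩ := hxy
  have hD : x i * y j - x j * y i ≠ 0 := sub_ne_zero.mpr hij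
  have hD' : algebraMap (𝓞 L) L (x i * y j - x j * y i) ≠ 0 :=
    (map_ne_zero_iff _ (FaithfulSMul.algebraMap_injective (𝓞 L) L)).mpr hD
  set T := (Ideal.finite_factors (I := Ideal.span {x i * y j - x j * y i})
    (by simpa using hD)).toFinset
  have hT : ∀ v, v ∉ T → x i * y j - x j * y i ∉ v.asIdeal := fun v hv => by
    simpa [T, Ideal.dvd_span_singleton] using hv
  have hfin := sum_log_absNorm_add_sum_log_adicAbv_le hD P hP hx hy (fun k => hcong k i j) T
    fun k => by simpa [T, Ideal.dvd_span_singleton] using hcong k i j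
  have hprod := sum_mult_log_add_sum_log_adicAbv_eq_zero hD' T fun v hv =>
    (v.adicAbv_coe_eq_one_iff (K := L) (HeightOneSpectrum.one_lt_absNorm_nnreal v) _).mpr (hT v hv)
  rw [map_sub, map_mul, map_mul] at hD' hfin hprod
  have hinf := sum_mult_log_cross_le (x := fun k => algebraMap (𝓞 L) L (x k))
    (y := fun k => algebraMap (𝓞 L) L (y k)) hD'
  have hhx := heightProj_mul_finrank _ T fun v hv =>
    supAdicAbv_eq_one v (Ideal.exists_notMem_of_cross_notMem (hT v hv)).1
  have hhy := heightProj_mul_finrank _ T fun v hv =>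
    supAdicAbv_eq_one v (Ideal.exists_notMem_of_cross_notMem (hT v hv)).2
  rw [Finset.sum_add_distrib] at hfin
  have hd : (0 : ℝ) < Module.finrank ℚ L := by exact_mod_cast Module.finrank_pos
  rw [ge_iff_le, one_div, sub_le_iff_le_add, inv_mul_le_iff₀ hd]
  linarith
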